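/- Let a, b ∈ (π/m)ℤ with e^{ia} = -1 and e^{ib} ≠ -1. Then I(a,b) = m if e^{ibm} = (-1)^m, and I(a,b) = 1 - m - ((1-e^{ib})/(1+e^{ib}))² if e^{ibm} = -(-1)^m. -/

import Mathlib

open Complex Finset

/-- The modular S-matrix of the N=2 superconformal algebra at level `m`. -/
noncomputable def Smat (m : ℕ) (u v : ℝ × ℝ) : ℂ :=
  (2 / (m : ℂ)) * Complex.exp (Real.pi * Complex.I * (((u.1 - u.2) * (v.1 - v.2) / m : ℝ) : ℂ)) *
    Complex.sin (((Real.pi * (u.1 + u.2) * (v.1 + v.2) / m : ℝ) : ℂ))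

/-- The Neveu-Schwarz index set `NS^(m)`:
pairs of half-odd-integers `(j,k)` with `0 < j`, `0 < k`, `j + k < m`. -/
noncomputable def NSfin (m : ℕ) : Finset (ℝ × ℝ) :=
  ((Finset.range m ×ˢ Finset.range m).filter fun p => p.1 + p.2 + 1 < m).image
    fun p => ((p.1 : ℝ) + 1 / 2, (p.2 : ℝ) + 1 / 2)

/-- The Ramond index set `R^(m)`:
integer pairs `(j,k)` with `0 < j`, `0 < j + k < m`, `0 ≤ k < m`. -/
noncomputable def Rfin (m : ℕ) : Finset (ℝ × ℝ) :=
  ((Finset.range m ×ˢ Finset.range m).filter fun p => 1 ≤ p.1 ∧ p.1 + p.2 < m).image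
    fun p => ((p.1 : ℝ), (p.2 : ℝ))

/-- The full index set `A^(m) = NS^(m) ∪ R^(m)`. -/
noncomputable def Afin (m : ℕ) : Finset (ℝ × ℝ) := NSfin m ∪ Rfin m

/-- The conjugation `(j,k)* = (k,j)` if `k ≠ 0`, `(m-j, 0)` if `k = 0`. -/
noncomputable def conjA (m : ℕ) (u : ℝ × ℝ) : ℝ × ℝ :=
  if u.2 = 0 then ((m : ℝ) - u.1, 0) else (u.2, u.1)

/-- `J(a,b) = ∑ e^{iaj} e^{ibk}` over integer pairs `(j,k)` with
`0 < k < m`, `-k < j < k` and `j + k` odd. -/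
noncomputable def Jsum (m : ℕ) (a b : ℂ) : ℂ :=
  ∑ k ∈ Finset.Ioo (0 : ℤ) (m : ℤ),
    ∑ j ∈ (Finset.Ioo (-k) k).filter fun j => Odd (j + k),
      Complex.exp (Complex.I * a * j) * Complex.exp (Complex.I * b * k)

/-- `I(a,b) = J(a,b) + J(a,-b)`. -/
noncomputable def Isum (m : ℕ) (a b : ℂ) : ℂ := Jsum m a b + Jsum m a (-b)

/-- The fusion coefficient `N_{u,u',u''}` given by the modified Verlinde formula. -/
noncomputable def Nfus (m : ℕ) (u u' u'' : ℝ × ℝ) : ℂ :=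
  ∑ v ∈ NSfin m,
    Smat m u v * Smat m u' v * Smat m u'' v / Smat m (1 / 2, 1 / 2) v

/-- The fusion coefficient `N_{u,u'}^{u''}` (with conjugated third entry). -/
noncomputable def Ncof (m : ℕ) (u u' w : ℝ × ℝ) : ℂ :=
  ∑ v ∈ NSfin m,
    Smat m u v * Smat m u' v * (starRingEnd ℂ) (Smat m w v) / Smat m (1 / 2, 1 / 2) v

/-- Membership in `𝔽^(m)`: an odd number of the three indices is of Neveu-Schwarz type. -/
def Fmem (m : ℕ) (u u' u'' : ℝ × ℝ) : Prop :=
  (u ∈ NSfin m ∧ u' ∈ NSfin m ∧ u'' ∈ NSfin m) ∨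
  (u ∈ NSfin m ∧ u' ∈ Rfin m ∧ u'' ∈ Rfin m) ∨
  (u ∈ Rfin m ∧ u' ∈ NSfin m ∧ u'' ∈ Rfin m) ∨
  (u ∈ Rfin m ∧ u' ∈ Rfin m ∧ u'' ∈ NSfin m)

/-!
Since `e^{ia} = -1`, the summand `e^{iaj}` equals `-(-1)^k` whenever `j + k` is odd, and there
are `k` such `j`; so with `z = -e^{ib}` one gets `J(a,b) = -∑_{k<m} k z^k` and `J(a,-b)` the
same sum at `z⁻¹`. The hypothesis on `e^{ibm}` says `z^m = ±1`, and then the closed form of the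
arithmetico-geometric sum `∑_{k<m} k z^k` makes the two sums add up to `-m`, resp. `m + 4z/(z-1)²`.
-/

section ArithmeticGeometric

variable {K : Type*} [Field K]

theorem sum_range_natCast_mul_pow {z : K} (hz : z ≠ 1) (m : ℕ) :
    ∑ k ∈ range m, (k : K) * z ^ k = m * z ^ m / (z - 1) - z * (z ^ m - 1) / (z - 1) ^ 2 := by
  have hz' : z - 1 ≠ 0 := sub_ne_zero.mpr hz
  induction m with
  | zero => simp
  | succ n ih =>
    rw [sum_range_succ, ih]
    field_simp
    push_cast
    ring

theorem sum_range_natCast_mul_pow_add_inv_of_pow_eq_one {z : K} (hz0 : z ≠ 0) (hz1 : z ≠ 1)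
    {m : ℕ} (hm : z ^ m = 1) :
    ∑ k ∈ range m, (k : K) * z ^ k + ∑ k ∈ range m, (k : K) * z⁻¹ ^ k = -m := by
  have hz' : z - 1 ≠ 0 := sub_ne_zero.mpr hz1
  rw [sum_range_natCast_mul_pow hz1, sum_range_natCast_mul_pow (inv_ne_one.mpr hz1), inv_pow, hm]
  field_simp
  ring

theorem sum_range_natCast_mul_pow_add_inv_of_pow_eq_neg_one {z : K} (hz0 : z ≠ 0) (hz1 : z ≠ 1)
    {m : ℕ} (hm : z ^ m = -1) :
    ∑ k ∈ range m, (k : K) * z ^ k + ∑ k ∈ range m, (k : K) * z⁻¹ ^ k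
      = m + 4 * z / (z - 1) ^ 2 := by
  have hz' : z - 1 ≠ 0 := sub_ne_zero.mpr hz1
  rw [sum_range_natCast_mul_pow hz1, sum_range_natCast_mul_pow (inv_ne_one.mpr hz1), inv_pow, hm]
  field_simp
  ring

end ArithmeticGeometric

theorem sum_Ioo_int_zero_eq_sum_range {M : Type*} [AddCommMonoid M] {f : ℤ → M} (hf : f 0 = 0)
    (m : ℕ) : ∑ k ∈ Ioo (0 : ℤ) m, f k = ∑ k ∈ range m, f k := by
  rcases m.eq_zero_or_pos with rfl | hm
  · simp
  have hIco := add_sum_Ioo_eq_sum_Ico (f := f) (by exact_mod_cast hm : (0 : ℤ) < m)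
  rw [hf, zero_add] at hIco
  rw [hIco, Int.Ico_eq_finset_map, sum_map]
  simp

theorem card_filter_odd_add_Ioo_neg (k : ℕ) :
    #((Ioo (-(k : ℤ)) k).filter fun j => Odd (j + (k : ℤ))) = k := by
  have : (Ioo (-(k : ℤ)) k).filter (fun j => Odd (j + (k : ℤ)))
      = (range k).image fun t : ℕ => 2 * (t : ℤ) + 1 - k := by
    ext j
    simp only [mem_filter, mem_Ioo, mem_image, mem_range, Int.odd_iff]
    constructor
    · rintro ⟨⟨h1, h2⟩, h3⟩
      exact ⟨((j + k - 1) / 2).toNat, by omega, by omega⟩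
    · rintro ⟨t, ht, rfl⟩
      omega
  rw [this, card_image_of_injective _ (fun s t h => by simpa using h), card_range]

theorem Jsum_of_exp_eq_neg_one (m : ℕ) {a : ℂ} (b : ℂ) (ha : exp (I * a) = -1) :
    Jsum m a b = -∑ k ∈ range m, (k : ℂ) * (-exp (I * b)) ^ k := by
  have hterm (k : ℕ) (j : ℤ) (hj : Odd (j + k)) :
      exp (I * a * j) * exp (I * b * (k : ℤ)) = -(-exp (I * b)) ^ k := by
    obtain ⟨t, ht⟩ := hj
    rw [mul_comm _ (j : ℂ), mul_comm _ ((k : ℤ) : ℂ), exp_int_mul, exp_int_mul, ha,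
      show j = 2 * (t - k) + 1 + k by omega, zpow_add₀ (by norm_num), zpow_add₀ (by norm_num),
      zpow_mul, zpow_natCast, zpow_natCast, neg_pow (exp (I * b))]
    simp
  rw [Jsum, ← sum_neg_distrib, sum_Ioo_int_zero_eq_sum_range (by simp)]
  refine sum_congr rfl fun k _ => ?_
  rw [sum_congr rfl fun j hj => hterm k j (mem_filter.mp hj).2, sum_const,
    card_filter_odd_add_Ioo_neg, nsmul_eq_mul, mul_neg]

theorem Isum_of_exp_eq_neg_one (m : ℕ) {a : ℂ} (b : ℂ) (ha : exp (I * a) = -1) :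
    Isum m a b = -(∑ k ∈ range m, (k : ℂ) * (-exp (I * b)) ^ k
      + ∑ k ∈ range m, (k : ℂ) * (-exp (I * b))⁻¹ ^ k) := by
  rw [Isum, Jsum_of_exp_eq_neg_one m b ha, Jsum_of_exp_eq_neg_one m (-b) ha, mul_neg, exp_neg,
    neg_inv]
  ring

theorem Isum_negone_ne_negone_general (m : ℕ) (a b : ℝ)
    (ha : Complex.exp (Complex.I * a) = -1) (hb : Complex.exp (Complex.I * b) ≠ -1) :
    (Complex.exp (Complex.I * b * m) = (-1) ^ m → Isum m a b = m) ∧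
    (Complex.exp (Complex.I * b * m) = -(-1) ^ m →
      Isum m a b = 1 - m -
        ((1 - Complex.exp (Complex.I * b)) / (1 + Complex.exp (Complex.I * b))) ^ 2) := by
  obtain ⟨z, hz⟩ : ∃ z, -exp (I * b) = z := ⟨_, rfl⟩
  have hexp : exp (I * b) = -z := by rw [← hz, neg_neg]
  have hz0 : z ≠ 0 := by simp [← hz, exp_ne_zero]
  have hz1 : z ≠ 1 := fun h => hb (by rw [hexp, h])
  have hzm : z ^ m = (-1) ^ m * exp (I * b * m) := by
    rw [← hz, neg_pow, mul_comm _ (m : ℂ), exp_nat_mul]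
  rw [Isum_of_exp_eq_neg_one m b ha, hz, hexp]
  refine ⟨fun h => ?_, fun h => ?_⟩
  · rw [sum_range_natCast_mul_pow_add_inv_of_pow_eq_one hz0 hz1
      (by rw [hzm, h, ← mul_pow]; norm_num), neg_neg]
  · have hz1' : 1 - z ≠ 0 := sub_ne_zero.mpr hz1.symm
    rw [sum_range_natCast_mul_pow_add_inv_of_pow_eq_neg_one hz0 hz1
      (by rw [hzm, h, mul_neg, ← mul_pow]; norm_num), sub_neg_eq_add, ← sub_eq_add_neg]
    field_simp
    ring

theorem Isum_negone_ne_negone (m : ℕ) (hm : 0 < m) (a b : ℝ)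
    (haZ : ∃ p : ℤ, a = Real.pi * p / m) (hbZ : ∃ q : ℤ, b = Real.pi * q / m)
    (ha : Complex.exp (Complex.I * a) = -1) (hb : Complex.exp (Complex.I * b) ≠ -1) :
    (Complex.exp (Complex.I * b * m) = (-1) ^ m → Isum m a b = m) ∧
    (Complex.exp (Complex.I * b * m) = -(-1) ^ m →
      Isum m a b = 1 - m -
        ((1 - Complex.exp (Complex.I * b)) / (1 + Complex.exp (Complex.I * b))) ^ 2) :=
  Isum_negone_ne_negone_general m a b ha hb
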